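/- For every 1 ≤ r ≤ n−1, every Q ∈ {0,1} and all bits D₁,…,D_r, e₁,…,e_r ∈ {0,1}, the vector w = M_{r,D_r,e_r} ⋯ M_{1,D_1,e_1} · v_Q ∈ ℂ⁴ has real entries, exactly one of the two pairs (w₁,w₂), (w₃,w₄) equals (0,0), and the other pair has Euclidean norm 1. Moreover, for all bits D₁,…,D_n, e₁,…,e_n, Q, k₀ ∈ {0,1}, |u_{k₀}ᵀ · M_{n,D_n,e_n} ⋯ M_{1,D_1,e_1} · v_Q| = 1. -/

import Mathlib

open Complex Matrix

/-- The rotation matrix `R(a) = [[cos a, −sin a],[sin a, cos a]]` (with complex entries). -/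
noncomputable def Rrot (a : ℝ) : Matrix (Fin 2) (Fin 2) ℂ :=
  !![(Real.cos a : ℂ), -(Real.sin a : ℂ); (Real.sin a : ℂ), (Real.cos a : ℂ)]

/-- A `4×4` matrix built from four `2×2` blocks. -/
def blk (A B C D : Matrix (Fin 2) (Fin 2) ℂ) : Matrix (Fin 4) (Fin 4) ℂ :=
  Matrix.reindex finSumFinEquiv finSumFinEquiv (Matrix.fromBlocks A B C D)

/-- The `4×4` block matrices `M_{j,D,e}`: for `j ≤ n−1`,
`M_{j,D,e} = [[I₂, R(π/2)],[0,0]]` if `e = D` and `[[0,0],[R(φ_j+π/2), R(φ_j)]]` if `e ≠ D`;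
for `j = n`, `M_{n,D,e} = [[I₂,0],[R(φ_{n+1}+π/2),0]]·[[I₂,R(π/2)],[0,0]]` if `e = D` and
`[[0,R(π/2)],[0,R(φ_{n+1})]]·[[0,0],[R(φ_n+π/2),R(φ_n)]]` if `e ≠ D`. -/
noncomputable def Mmat (n : ℕ) (φ : ℕ → ℝ) (j : ℕ) (D e : Bool) :
    Matrix (Fin 4) (Fin 4) ℂ :=
  if j = n then
    if e = D then
      blk 1 0 (Rrot (φ (n + 1) + Real.pi / 2)) 0 * blk 1 (Rrot (Real.pi / 2)) 0 0
    else
      blk 0 (Rrot (Real.pi / 2)) 0 (Rrot (φ (n + 1))) *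
        blk 0 0 (Rrot (φ n + Real.pi / 2)) (Rrot (φ n))
  else
    if e = D then blk 1 (Rrot (Real.pi / 2)) 0 0
    else blk 0 0 (Rrot (φ j + Real.pi / 2)) (Rrot (φ j))

/-- `v₀ = (1,0,0,0)ᵀ`, `v₁ = (0,0,1,0)ᵀ` (indexed by the corresponding bit). -/
def vvec : Bool → Fin 4 → ℂ := fun Q => if Q then ![0, 0, 1, 0] else ![1, 0, 0, 0]

/-- `u₀ = (1,i,0,0)ᵀ`, `u₁ = (0,0,1,i)ᵀ` (indexed by the corresponding bit). -/
noncomputable def uvec : Bool → Fin 4 → ℂ := fun k => if k then ![0, 0, 1, I] else ![1, I, 0, 0]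

/-- The ordered product `M_{r,D_r,e_r} ⋯ M_{2,D_2,e_2} · M_{1,D_1,e_1}` for given bit
sequences `D`, `e`. -/
noncomputable def MprodSeq (n : ℕ) (φ : ℕ → ℝ) (D e : ℕ → Bool) :
    ℕ → Matrix (Fin 4) (Fin 4) ℂ
  | 0 => 1
  | l + 1 => Mmat n φ (l + 1) (D (l + 1)) (e (l + 1)) * MprodSeq n φ D e l

/-!
Split `ℂ⁴` into two blocks of `ℂ²`. For `j < n`, one block row of `M_{j,D,e}` is zero and the other
consists of rotations (`I₂ = R(0)`), so it maps a vector with one zero block and a real unit vector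
in the other block to a vector of the same kind, starting from `v_Q`. The last matrix `M_{n,D,e}`
then produces two real unit vectors `(x, y)`, and `u_{k₀}` reads off `x₀ + i x₁` or `y₀ + i y₁`,
of modulus `|x| = 1` or `|y| = 1`.
-/

def blkVec (x y : Fin 2 → ℂ) : Fin 4 → ℂ := Sum.elim x y ∘ (finSumFinEquiv (m := 2) (n := 2)).symm

@[simp]
lemma blkVec_apply (x y : Fin 2 → ℂ) :
    blkVec x y 0 = x 0 ∧ blkVec x y 1 = x 1 ∧ blkVec x y 2 = y 0 ∧ blkVec x y 3 = y 1 :=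
  ⟨rfl, rfl, rfl, rfl⟩

lemma blk_mulVec_blkVec (A B C D : Matrix (Fin 2) (Fin 2) ℂ) (x y : Fin 2 → ℂ) :
    blk A B C D *ᵥ blkVec x y = blkVec (A *ᵥ x + B *ᵥ y) (C *ᵥ x + D *ᵥ y) := by
  rw [blk, reindex_apply, submatrix_mulVec_equiv, blkVec, Equiv.symm_symm, Function.comp_assoc,
    Equiv.symm_comp_self, Function.comp_id, fromBlocks_mulVec]
  rfl

lemma uvec_dotProduct_blkVec (k : Bool) (x y : Fin 2 → ℂ) :
    uvec k ⬝ᵥ blkVec x y = if k then y 0 + I * y 1 else x 0 + I * x 1 := by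
  cases k <;> simp [uvec, dotProduct, Fin.sum_univ_four]

def IsRealUnit (z : Fin 2 → ℂ) : Prop :=
  ∃ x y : ℝ, x ^ 2 + y ^ 2 = 1 ∧ z = ![(x : ℂ), y]

namespace IsRealUnit

variable {z : Fin 2 → ℂ}

lemma im_eq_zero (hz : IsRealUnit z) (i : Fin 2) : (z i).im = 0 := by
  obtain ⟨x, y, -, rfl⟩ := hz
  fin_cases i <;> simp

lemma norm_sq_add_norm_sq (hz : IsRealUnit z) : ‖z 0‖ ^ 2 + ‖z 1‖ ^ 2 = 1 := by
  obtain ⟨x, y, hxy, rfl⟩ := hz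
  simpa using hxy

lemma norm_add_I_mul (hz : IsRealUnit z) : ‖z 0 + I * z 1‖ = 1 := by
  obtain ⟨x, y, hxy, rfl⟩ := hz
  simp [mul_comm I, norm_add_mul_I, hxy]

lemma Rrot_mulVec (hz : IsRealUnit z) (a : ℝ) : IsRealUnit (Rrot a *ᵥ z) := by
  obtain ⟨x, y, hxy, rfl⟩ := hz
  refine ⟨Real.cos a * x - Real.sin a * y, Real.sin a * x + Real.cos a * y, ?_, ?_⟩
  · linear_combination (x ^ 2 + y ^ 2) * Real.sin_sq_add_cos_sq a + hxy
  · ext i; fin_cases i <;> simp [Rrot] <;> ring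

end IsRealUnit

def IsSingleBlockUnit (w : Fin 4 → ℂ) : Prop :=
  ∃ z, IsRealUnit z ∧ (w = blkVec z 0 ∨ w = blkVec 0 z)

lemma isSingleBlockUnit_vvec (Q : Bool) : IsSingleBlockUnit (vvec Q) := by
  have hunit : IsRealUnit ![1, 0] := ⟨1, 0, by norm_num, by simp⟩
  refine ⟨_, hunit, ?_⟩
  cases Q
  · left; ext i; fin_cases i <;> simp [vvec]
  · right; ext i; fin_cases i <;> simp [vvec]

namespace IsSingleBlockUnit

variable {w : Fin 4 → ℂ}

lemma im_eq_zero (hw : IsSingleBlockUnit w) (i : Fin 4) : (w i).im = 0 := by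
  obtain ⟨z, hz, rfl | rfl⟩ := hw <;> fin_cases i <;> simp [hz.im_eq_zero]

lemma exists_blk_top_mulVec (hw : IsSingleBlockUnit w) (a : ℝ) :
    ∃ z, IsRealUnit z ∧ blk 1 (Rrot a) 0 0 *ᵥ w = blkVec z 0 := by
  obtain ⟨z, hz, rfl | rfl⟩ := hw
  · exact ⟨z, hz, by simp [blk_mulVec_blkVec]⟩
  · exact ⟨_, hz.Rrot_mulVec a, by simp [blk_mulVec_blkVec]⟩

lemma exists_blk_bottom_mulVec (hw : IsSingleBlockUnit w) (a b : ℝ) :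
    ∃ z, IsRealUnit z ∧ blk 0 0 (Rrot a) (Rrot b) *ᵥ w = blkVec 0 z := by
  obtain ⟨z, hz, rfl | rfl⟩ := hw
  · exact ⟨_, hz.Rrot_mulVec a, by simp [blk_mulVec_blkVec]⟩
  · exact ⟨_, hz.Rrot_mulVec b, by simp [blk_mulVec_blkVec]⟩

lemma Mmat_mulVec {n j : ℕ} (hw : IsSingleBlockUnit w) (hj : j ≠ n) (φ : ℕ → ℝ) (D e : Bool) :
    IsSingleBlockUnit (Mmat n φ j D e *ᵥ w) := by
  rw [Mmat, if_neg hj]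
  split_ifs
  · obtain ⟨z, hz, h⟩ := hw.exists_blk_top_mulVec (Real.pi / 2)
    exact ⟨z, hz, .inl h⟩
  · obtain ⟨z, hz, h⟩ := hw.exists_blk_bottom_mulVec (φ j + Real.pi / 2) (φ j)
    exact ⟨z, hz, .inr h⟩

lemma exists_Mmat_self_mulVec (hw : IsSingleBlockUnit w) (n : ℕ) (φ : ℕ → ℝ) (D e : Bool) :
    ∃ x y, IsRealUnit x ∧ IsRealUnit y ∧ Mmat n φ n D e *ᵥ w = blkVec x y := by
  rw [Mmat, if_pos rfl]
  split_ifs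
  · obtain ⟨z, hz, h⟩ := hw.exists_blk_top_mulVec (Real.pi / 2)
    refine ⟨z, _, hz, hz.Rrot_mulVec (φ (n + 1) + Real.pi / 2), ?_⟩
    simp [← mulVec_mulVec, h, blk_mulVec_blkVec]
  · obtain ⟨z, hz, h⟩ := hw.exists_blk_bottom_mulVec (φ n + Real.pi / 2) (φ n)
    refine ⟨_, _, hz.Rrot_mulVec (Real.pi / 2), hz.Rrot_mulVec (φ (n + 1)), ?_⟩
    simp [← mulVec_mulVec, h, blk_mulVec_blkVec]

end IsSingleBlockUnit

lemma isSingleBlockUnit_MprodSeq_mulVec {n r : ℕ} (hr : r < n) (φ : ℕ → ℝ) (D e : ℕ → Bool)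
    (Q : Bool) : IsSingleBlockUnit (MprodSeq n φ D e r *ᵥ vvec Q) := by
  induction r with
  | zero => simpa [MprodSeq] using isSingleBlockUnit_vvec Q
  | succ r ih =>
    rw [MprodSeq, ← mulVec_mulVec]
    exact (ih (by omega)).Mmat_mulVec hr.ne _ _ _

/-- For every `1 ≤ r ≤ n−1`, every `Q ∈ {0,1}` and all bits
`D₁,…,D_r, e₁,…,e_r`, the vector `w = M_{r,D_r,e_r} ⋯ M_{1,D_1,e_1} · v_Q ∈ ℂ⁴` has real
entries, exactly one of the two pairs `(w₁,w₂)`, `(w₃,w₄)` equals `(0,0)`, and the other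
pair has Euclidean norm `1`.  Moreover, for all bits `D₁,…,D_n, e₁,…,e_n, Q, k₀`,
`|u_{k₀}ᵀ · M_{n,D_n,e_n} ⋯ M_{1,D_1,e_1} · v_Q| = 1`. -/
theorem stmt7 (n : ℕ) (hn : 2 ≤ n) (φ : ℕ → ℝ) :
    (∀ r : ℕ, 1 ≤ r → r ≤ n - 1 → ∀ D e : ℕ → Bool, ∀ Q : Bool,
      (∀ i : Fin 4, ((MprodSeq n φ D e r *ᵥ vvec Q) i).im = 0) ∧
      ((((MprodSeq n φ D e r *ᵥ vvec Q) 0 = 0 ∧ (MprodSeq n φ D e r *ᵥ vvec Q) 1 = 0) ∧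
          ‖(MprodSeq n φ D e r *ᵥ vvec Q) 2‖ ^ 2 +
            ‖(MprodSeq n φ D e r *ᵥ vvec Q) 3‖ ^ 2 = 1) ∨
        (((MprodSeq n φ D e r *ᵥ vvec Q) 2 = 0 ∧ (MprodSeq n φ D e r *ᵥ vvec Q) 3 = 0) ∧
          ‖(MprodSeq n φ D e r *ᵥ vvec Q) 0‖ ^ 2 +
            ‖(MprodSeq n φ D e r *ᵥ vvec Q) 1‖ ^ 2 = 1))) ∧
    (∀ D e : ℕ → Bool, ∀ Q k₀ : Bool,
      ‖uvec k₀ ⬝ᵥ (MprodSeq n φ D e n *ᵥ vvec Q)‖ = 1) := by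
  constructor
  · intro r _ hr D e Q
    have hw := isSingleBlockUnit_MprodSeq_mulVec (by omega : r < n) φ D e Q
    refine ⟨hw.im_eq_zero, ?_⟩
    obtain ⟨z, hz, h | h⟩ := hw <;> rw [h]
    · exact .inr ⟨by simp, by simpa using hz.norm_sq_add_norm_sq⟩
    · exact .inl ⟨by simp, by simpa using hz.norm_sq_add_norm_sq⟩
  · intro D e Q k
    obtain ⟨m, rfl⟩ : ∃ m, n = m + 1 := ⟨n - 1, by omega⟩
    obtain ⟨x, y, hx, hy, h⟩ :=
      (isSingleBlockUnit_MprodSeq_mulVec (lt_add_one m) φ D e Q).exists_Mmat_self_mulVec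
        (m + 1) φ (D (m + 1)) (e (m + 1))
    rw [MprodSeq, ← mulVec_mulVec, h, uvec_dotProduct_blkVec]
    cases k
    · exact hx.norm_add_I_mul
    · exact hy.norm_add_I_mul
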